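/- arXiv:2306.00243 — 6 statements merged into one kernel-verified Lean document; each statement's English description precedes it below -/
import Mathlib

section
/- Let T be a tree on n ≥ 3 vertices and k ≥ 3 odd. Then the Steiner k-form p_T^{(k)}(x) = Σ_{v_1,...,v_k ∈ V(T)} d_T(v_1,...,v_k) x_{v_1}···x_{v_k} has a nontrivial common zero of all its partial derivatives. Explicitly, choosing a leaf u with neighbor w, and a vertex v ≠ u adjacent to w, the vector y with y_u = 1, y_v = ζ, y_w = −1−ζ (where ζ = exp(πi/(k−1))) and all other coordinates 0 satisfies D_z p_T(y) = 0 for every vertex z. -/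
open MvPolynomial Finset

/-- The Steiner distance of a set `S` of vertices of `G`: the minimum number of
edges of a connected subgraph of `G` containing `S`. -/
noncomputable def steinerDist {V : Type*} (G : SimpleGraph V) (S : Set V) : ℕ :=
  sInf {m | ∃ H : G.Subgraph, H.Connected ∧ S ⊆ H.verts ∧ H.edgeSet.ncard = m}

/-- The Steiner 3-form of a graph on `Fin n`. -/
noncomputable def steinerForm3 {n : ℕ} (G : SimpleGraph (Fin n)) : MvPolynomial (Fin n) ℂ :=
  ∑ i, ∑ j, ∑ k, MvPolynomial.C (steinerDist G {i, j, k} : ℂ) *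
    MvPolynomial.X i * MvPolynomial.X j * MvPolynomial.X k

/-- The Steiner k-form of a graph on `Fin n`. -/
noncomputable def steinerFormK {n : ℕ} (G : SimpleGraph (Fin n)) (k : ℕ) :
    MvPolynomial (Fin n) ℂ :=
  ∑ f : Fin k → Fin n, MvPolynomial.C (steinerDist G (Set.range f) : ℂ) *
    ∏ j, MvPolynomial.X (f j)

noncomputable def sPoly (n : ℕ) : MvPolynomial (Fin n) ℂ := ∑ r, MvPolynomial.X r

noncomputable def gPoly {n : ℕ} (G : SimpleGraph (Fin n)) : MvPolynomial (Fin n) ℂ :=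
  3 * ∑ i, ∑ j, if i < j then
    MvPolynomial.C (G.dist i j : ℂ) * MvPolynomial.X i * MvPolynomial.X j else 0

/-!
In a tree, the Steiner distance of a set `S ∋ z` is the number of edges `e` that separate `z` from
some point of `S`. Differentiating the Steiner form reduces `D_z p_T(y)` to `k` times
`∑_g d_T({z} ∪ range g) ∏ y (g i)` over `g : Fin (k-1) → V`; summing edge by edge, the edge `e`
contributes `(∑ y)^(k-1) - y(C_e)^(k-1)`, where `C_e` is the side of `e` containing `z`. Here
`∑ y = 0`, and since `u - w - v` is a path, `y(C_e)` is `0` or `∑ y` unless `e = uw`, where it is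
`±1`, or `e = wv`, where it is `±ζ`. As `k - 1` is even and `ζ^(k-1) = -1`, these two
contributions cancel.
-/

theorem Derivation.leibniz_prod {R A M : Type*} [CommSemiring R] [CommSemiring A]
    [AddCommMonoid M] [Algebra R A] [Module A M] [Module R M] [IsScalarTower R A M]
    {ι : Type*} [DecidableEq ι] (D : Derivation R A M) (s : Finset ι) (a : ι → A) :
    D (∏ i ∈ s, a i) = ∑ i ∈ s, (∏ j ∈ s.erase i, a j) • D (a i) := by
  induction s using Finset.induction_on with
  | empty => simp
  | insert i s hi ih =>
    rw [prod_insert hi, leibniz, ih, sum_insert hi, erase_insert hi, smul_sum, add_comm]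
    congr 1
    refine sum_congr rfl fun j hj => ?_
    rw [erase_insert_of_ne (ne_of_mem_of_not_mem hj hi).symm,
      prod_insert fun h => hi (mem_of_mem_erase h), mul_smul]

lemma Fintype.sum_eq_add_add {α M : Type*} [Fintype α] [AddCommMonoid M] {f : α → M} {a b c : α}
    (hab : a ≠ b) (hac : a ≠ c) (hbc : b ≠ c) (h : ∀ x, x ≠ a → x ≠ b → x ≠ c → f x = 0) :
    ∑ x, f x = f a + f b + f c := by
  classical
  rw [← Finset.sum_subset (subset_univ {a, b, c}) fun x _ hx => by simp_all,
    sum_insert (by simp [hab, hac]), sum_pair hbc, add_assoc]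

open Classical in
lemma sum_ite_exists_mul_prod {σ ι R : Type*} [Fintype σ] [Fintype ι] [DecidableEq ι] [CommRing R]
    (y : σ → R) (P : σ → Prop) :
    ∑ g : ι → σ, (if ∃ i, P (g i) then 1 else 0) * ∏ i, y (g i) =
      (∑ x, y x) ^ Fintype.card ι - (∑ x, if P x then 0 else y x) ^ Fintype.card ι := by
  have hpow (t : σ → R) : (∑ x, t x) ^ Fintype.card ι = ∑ g : ι → σ, ∏ i, t (g i) := by
    rw [← Fintype.prod_sum, prod_const, card_univ]
  rw [hpow, hpow, ← sum_sub_distrib]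
  refine sum_congr rfl fun g _ => ?_
  split_ifs with h
  · obtain ⟨i, hi⟩ := h
    have : ∏ i, (if P (g i) then 0 else y (g i)) = 0 := prod_eq_zero (mem_univ i) (if_pos hi)
    rw [one_mul, this, sub_zero]
  · push Not at h
    simp [h]

section Polynomial

lemma range_funSplitAt_symm {σ ι : Type*} [DecidableEq ι] (j : ι) (a : σ) (g : {i // i ≠ j} → σ) :
    Set.range ((Equiv.funSplitAt j σ).symm (a, g)) = insert a (Set.range g) := by
  ext x
  simp only [Set.mem_range, Set.mem_insert_iff, Equiv.funSplitAt_symm_apply]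
  constructor
  · rintro ⟨i, rfl⟩
    by_cases h : i = j
    · simp [h]
    · exact .inr ⟨⟨i, h⟩, by simp [h]⟩
  · rintro (rfl | ⟨i, rfl⟩)
    · exact ⟨j, by simp⟩
    · exact ⟨i, by simp [i.2]⟩

variable {σ ι R : Type*} [Fintype σ] [DecidableEq σ] [Fintype ι] [DecidableEq ι] [CommRing R]

lemma eval_pderiv_sum_range_mul_prod_X (c : Set σ → R) (y : σ → R) (z : σ) :
    eval y (pderiv z (∑ f : ι → σ, C (c (Set.range f)) * ∏ j, X (f j))) =
      ∑ j : ι, ∑ g : {i // i ≠ j} → σ, c (insert z (Set.range g)) * ∏ i, y (g i) := by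
  simp only [map_sum, pderiv_C_mul, Derivation.leibniz_prod, pderiv_X, Pi.single_apply,
    smul_eq_mul, map_mul, eval_C, map_prod, eval_X, mul_sum]
  rw [sum_comm]
  refine sum_congr rfl fun j _ => ?_
  rw [← (Equiv.funSplitAt j σ).symm.sum_comp, Fintype.sum_prod_type, sum_eq_single z]
  · refine sum_congr rfl fun g _ => ?_
    rw [range_funSplitAt_symm, prod_subtype (univ.erase j) (p := (· ≠ j)) (F := inferInstance)
      (fun _ => by simp)]
    simp only [Equiv.funSplitAt_symm_apply, dite_true, if_true, map_one, mul_one]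
    exact congrArg _ (prod_congr rfl fun i _ => by rw [dif_neg i.2])
  · intro a _ ha
    simp [ha]
  · simp

end Polynomial

section SteinerDist

variable {V : Type*} {G : SimpleGraph V} {S : Set V}

lemma steinerDist_le_ncard {H : G.Subgraph} (hH : H.Connected) (hS : S ⊆ H.verts) :
    steinerDist G S ≤ H.edgeSet.ncard :=
  Nat.sInf_le ⟨H, hH, hS, rfl⟩

lemma le_steinerDist {m : ℕ} {H : G.Subgraph} (hH : H.Connected) (hS : S ⊆ H.verts)
    (h : ∀ H' : G.Subgraph, H'.Connected → S ⊆ H'.verts → m ≤ H'.edgeSet.ncard) :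
    m ≤ steinerDist G S :=
  le_csInf ⟨_, H, hH, hS, rfl⟩ fun _ ⟨H', hH', hS', hm⟩ => hm ▸ h H' hH' hS'

end SteinerDist

namespace SimpleGraph

variable {V : Type*} {G : SimpleGraph V} {a b c z : V} {e : Sym2 V}

/-- Equivalently, `a` and `b` lie in different components of `G - e`
(`reachable_deleteEdges_iff_exists_walk`). -/
def Separates (G : SimpleGraph V) (e : Sym2 V) (a b : V) : Prop :=
  ∀ p : G.Walk a b, e ∈ p.edges

lemma not_separates_self : ¬ G.Separates e a a := fun h => by simpa using h .nil

lemma Separates.symm (h : G.Separates e a b) : G.Separates e b a := fun p => by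
  simpa using h p.reverse

lemma separates_comm : G.Separates e a b ↔ G.Separates e b a := ⟨.symm, .symm⟩

lemma not_separates_trans (hab : ¬ G.Separates e a b) (hbc : ¬ G.Separates e b c) :
    ¬ G.Separates e a c := by
  simp only [Separates, not_forall] at hab hbc ⊢
  obtain ⟨p, hp⟩ := hab
  obtain ⟨q, hq⟩ := hbc
  exact ⟨p.append q, by simp [hp, hq]⟩

lemma separates_congr_right (hab : ¬ G.Separates e a b) :
    G.Separates e z a ↔ G.Separates e z b := by
  rw [← not_iff_not]
  exact ⟨(not_separates_trans · hab), (not_separates_trans · (separates_comm.not.1 hab))⟩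

lemma not_separates_of_adj (h : G.Adj a b) (he : e ≠ s(a, b)) : ¬ G.Separates e a b :=
  fun hs => he (by simpa using hs h.toWalk)

lemma IsAcyclic.separates_of_adj (hG : G.IsAcyclic) (h : G.Adj a b) :
    G.Separates s(a, b) a b :=
  isBridge_iff_forall_walk_mem_edges.1 (isAcyclic_iff_forall_adj_isBridge.1 hG h)

lemma IsAcyclic.separates_of_mem_edges (hG : G.IsAcyclic) {p : G.Walk a b} (hp : p.IsPath)
    (he : e ∈ p.edges) : G.Separates e a b := by
  classical
  intro q
  have hpq : p = q.bypass :=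
    congrArg Subtype.val ((hG.subsingleton_path a b).elim ⟨p, hp⟩ ⟨q.bypass, q.bypass_isPath⟩)
  exact q.edges_bypass_subset_edges (hpq ▸ he)

/-- The endpoint `x` of `p` is kept free so that `induction p` applies. -/
lemma not_separates_or_of_walk {x : V} (p : G.Walk z x) (hx : x = a) :
    ¬ G.Separates s(a, b) z a ∨ ¬ G.Separates s(a, b) z b := by
  induction p with
  | nil => exact .inl (hx ▸ not_separates_self)
  | @cons z z' x h p ih =>
    by_cases he : s(z, z') = s(a, b)
    · rcases Sym2.eq_iff.1 he with ⟨rfl, -⟩ | ⟨rfl, -⟩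
      exacts [.inl not_separates_self, .inr not_separates_self]
    · exact (ih hx).imp (not_separates_trans (not_separates_of_adj h (Ne.symm he)))
        (not_separates_trans (not_separates_of_adj h (Ne.symm he)))

lemma IsTree.separates_iff_not_separates (hG : G.IsTree) (h : G.Adj a b) (z : V) :
    G.Separates s(a, b) z a ↔ ¬ G.Separates s(a, b) z b := by
  obtain ⟨p⟩ := hG.connected.preconnected z a
  refine ⟨fun hza => (not_separates_or_of_walk p rfl).resolve_left (not_not_intro hza),
    fun hzb => by_contra fun hza => ?_⟩
  exact not_separates_trans (separates_comm.not.1 hza) hzb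
    (SimpleGraph.IsAcyclic.separates_of_adj hG.isAcyclic h)

lemma Subgraph.Connected.mem_edgeSet_of_separates {H : G.Subgraph} (hH : H.Connected)
    (ha : a ∈ H.verts) (hb : b ∈ H.verts) (h : G.Separates e a b) : e ∈ H.edgeSet := by
  obtain ⟨p, hp⟩ :=
    (Subgraph.preconnected_iff_forall_exists_walk_subgraph H).1 hH.preconnected ha hb
  exact Subgraph.edgeSet_mono hp ((Walk.mem_edges_toSubgraph p).2 (h p))

lemma Subgraph.connected_iSup {ι : Type*} [Nonempty ι] {f : ι → G.Subgraph}
    (hf : ∀ i, (f i).Connected) (hz : ∀ i, z ∈ (f i).verts) : (⨆ i, f i).Connected := by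
  rw [Subgraph.connected_iff', connected_iff_exists_forall_reachable]
  have hmem : ∀ {x} i, x ∈ (f i).verts → x ∈ (⨆ i, f i).verts := fun i hx => by
    rw [Subgraph.verts_iSup]; exact Set.mem_iUnion.2 ⟨i, hx⟩
  refine ⟨⟨z, hmem (Classical.arbitrary ι) (hz _)⟩, ?_⟩
  rintro ⟨x, hx⟩
  obtain ⟨i, hi⟩ := Set.mem_iUnion.1 (Subgraph.verts_iSup ▸ hx)
  exact ((hf i).preconnected ⟨z, hz i⟩ ⟨x, hi⟩).map (Subgraph.inclusion (le_iSup f i))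

theorem IsTree.steinerDist_eq_ncard [Finite V] (hG : G.IsTree) {S : Set V} (hz : z ∈ S) :
    steinerDist G S = {e | ∃ b ∈ S, G.Separates e z b}.ncard := by
  classical
  set X := {e | ∃ b ∈ S, G.Separates e z b}
  let p (b : S) : G.Walk z b := (hG.connected.preconnected z b).some.bypass
  let H : G.Subgraph := ⨆ b : S, (p b).toSubgraph
  have : Nonempty S := ⟨⟨z, hz⟩⟩
  have hH : H.Connected :=
    Subgraph.connected_iSup (fun b => (p b).toSubgraph_connected)
      (fun b => (p b).start_mem_verts_toSubgraph)
  have hS : S ⊆ H.verts := fun b hb => by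
    rw [Subgraph.verts_iSup]
    exact Set.mem_iUnion.2 ⟨⟨b, hb⟩, (p _).end_mem_verts_toSubgraph⟩
  have hHX : H.edgeSet ⊆ X := by
    rw [Subgraph.edgeSet_iSup]
    exact Set.iUnion_subset fun b e he => ⟨b, b.2, SimpleGraph.IsAcyclic.separates_of_mem_edges
      hG.isAcyclic (Walk.bypass_isPath _) ((Walk.mem_edges_toSubgraph _).1 he)⟩
  refine le_antisymm ((steinerDist_le_ncard hH hS).trans
    (Set.ncard_le_ncard hHX (Set.toFinite X))) (le_steinerDist hH hS fun H' hH' hS' => ?_)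
  refine Set.ncard_le_ncard ?_ (Set.toFinite _)
  rintro e ⟨b, hb, he⟩
  exact hH'.mem_edgeSet_of_separates (hS' hz) (hS' hb) he

end SimpleGraph

namespace SimpleGraph

variable {V ι R : Type*} [Fintype V] [Fintype ι] [DecidableEq ι] [CommRing R]
  {G : SimpleGraph V}

open Classical in
theorem IsTree.sum_steinerDist_mul_prod (hG : G.IsTree) (z : V) (y : V → R) :
    ∑ g : ι → V, (steinerDist G (insert z (Set.range g)) : R) * ∏ i, y (g i) =
      ∑ e : Sym2 V, ((∑ x, y x) ^ Fintype.card ι -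
        (∑ x, if G.Separates e z x then 0 else y x) ^ Fintype.card ι) := by
  have hd (g : ι → V) : (steinerDist G (insert z (Set.range g)) : R) =
      ∑ e : Sym2 V, if ∃ i, G.Separates e z (g i) then 1 else 0 := by
    rw [hG.steinerDist_eq_ncard (Set.mem_insert z _), ← natCast_card_filter,
      Set.ncard_eq_toFinset_card']
    congr 2
    ext e
    simp [not_separates_self]
  simp only [hd, sum_mul]
  rw [sum_comm]
  exact sum_congr rfl fun e _ => sum_ite_exists_mul_prod y _

variable {y : V → R} {ζ : R} {u v w : V}

open Classical in
theorem IsTree.sum_pow_sum_ite_separates_eq_zero (hG : G.IsTree) (huw : G.Adj u w)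
    (hwv : G.Adj w v) (hvu : v ≠ u) (hyu : y u = 1) (hyv : y v = ζ) (hyw : y w = -1 - ζ)
    (hy0 : ∀ x, x ≠ u → x ≠ v → x ≠ w → y x = 0) {m : ℕ} (hm : Even m) (hm0 : m ≠ 0)
    (hζ : ζ ^ m = -1) (z : V) :
    ∑ e : Sym2 V, (∑ x, if G.Separates e z x then 0 else y x) ^ m = 0 := by
  have hsum (e : Sym2 V) : (∑ x, if G.Separates e z x then 0 else y x) =
      (if G.Separates e z u then 0 else 1) + (if G.Separates e z v then 0 else ζ) +
        (if G.Separates e z w then 0 else -1 - ζ) := by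
    rw [Fintype.sum_eq_add_add hvu.symm huw.ne hwv.ne' fun x hu hv hw => by simp [hy0 x hu hv hw],
      hyu, hyv, hyw]
  have hne : s(u, w) ≠ s(w, v) := by simp [huw.ne, hvu.symm]
  have huw_val : (∑ x, if G.Separates s(u, w) z x then 0 else y x) ^ m = 1 := by
    have hu := hG.separates_iff_not_separates huw z
    have hv := separates_congr_right (z := z) (not_separates_of_adj hwv hne)
    rw [hsum, hu, ← hv]
    by_cases h : G.Separates s(u, w) z w <;> simp [h, hm.neg_pow]
  have hwv_val : (∑ x, if G.Separates s(w, v) z x then 0 else y x) ^ m = -1 := by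
    have hu := separates_congr_right (z := z) (not_separates_of_adj huw hne.symm)
    have hv := hG.separates_iff_not_separates hwv z
    rw [hsum, hu]
    by_cases h : G.Separates s(w, v) z v
    · simp only [hv, h, not_true, if_true, if_false]
      rw [show (1 : R) + 0 + (-1 - ζ) = -ζ by ring, hm.neg_pow, hζ]
    · simp [hv, h, hζ]
  rw [Fintype.sum_eq_add _ _ hne fun e ⟨h₁, h₂⟩ => ?_, huw_val, hwv_val, add_neg_cancel]
  have hu := separates_congr_right (z := z) (not_separates_of_adj huw h₁)
  have hv := separates_congr_right (z := z) (not_separates_of_adj hwv h₂)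
  rw [hsum, hu, ← hv]
  by_cases h : G.Separates e z w <;> simp [h, hm0]

theorem IsTree.sum_steinerDist_mul_prod_eq_zero (hG : G.IsTree) (huw : G.Adj u w)
    (hwv : G.Adj w v) (hvu : v ≠ u) (hyu : y u = 1) (hyv : y v = ζ) (hyw : y w = -1 - ζ)
    (hy0 : ∀ x, x ≠ u → x ≠ v → x ≠ w → y x = 0) (hι : Even (Fintype.card ι))
    (hι0 : Fintype.card ι ≠ 0) (hζ : ζ ^ Fintype.card ι = -1) (z : V) :
    ∑ g : ι → V, (steinerDist G (insert z (Set.range g)) : R) * ∏ i, y (g i) = 0 := by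
  have hy : ∑ x, y x = 0 := by
    rw [Fintype.sum_eq_add_add hvu.symm huw.ne hwv.ne' hy0, hyu, hyv, hyw]
    ring
  rw [hG.sum_steinerDist_mul_prod, hy, zero_pow hι0, sum_sub_distrib, sum_const_zero, zero_sub,
    hG.sum_pow_sum_ite_separates_eq_zero huw hwv hvu hyu hyv hyw hy0 hι hι0 hζ, neg_zero]

end SimpleGraph

theorem stmt4_general {n k : ℕ} (hk : 3 ≤ k) (hodd : Odd k)
    (G : SimpleGraph (Fin n)) (hT : G.IsTree)
    (u v w : Fin n) (huw : G.Adj u w)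
    (hwv : G.Adj w v) (hvu : v ≠ u)
    (y : Fin n → ℂ)
    (hy : y = fun z => if z = u then 1
      else if z = v then Complex.exp (Real.pi * Complex.I / (k - 1))
      else if z = w then -1 - Complex.exp (Real.pi * Complex.I / (k - 1)) else 0) :
    y ≠ 0 ∧ ∀ z : Fin n,
      MvPolynomial.eval y (MvPolynomial.pderiv z (steinerFormK G k)) = 0 := by
  set ζ := Complex.exp (Real.pi * Complex.I / (k - 1))
  have hζ : ζ ^ (k - 1) = -1 := by
    rw [← Complex.exp_nat_mul, Nat.cast_sub (by omega : 1 ≤ k), Nat.cast_one,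
      mul_div_cancel₀ _ (sub_ne_zero.2 (by exact_mod_cast (by omega : k ≠ 1))),
      Complex.exp_pi_mul_I]
  have hyu : y u = 1 := by simp [hy]
  have hyv : y v = ζ := by simp [hy, hvu]
  have hyw : y w = -1 - ζ := by simp [hy, huw.ne', hwv.ne]
  have hy0 (x : Fin n) (hu : x ≠ u) (hv : x ≠ v) (hw : x ≠ w) : y x = 0 := by simp [hy, hu, hv, hw]
  refine ⟨fun h => one_ne_zero (hyu.symm.trans (congrFun h u)), fun z => ?_⟩
  rw [steinerFormK, eval_pderiv_sum_range_mul_prod_X (fun S => (steinerDist G S : ℂ))]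
  refine sum_eq_zero fun j _ => ?_
  have hcard : Fintype.card {i // i ≠ j} = k - 1 := by simp [Fintype.card_subtype_compl]
  exact hT.sum_steinerDist_mul_prod_eq_zero huw hwv hvu hyu hyv hyw hy0
    (hcard ▸ Nat.Odd.sub_odd hodd odd_one) (by omega) (hcard ▸ hζ) z

theorem stmt4 {n k : ℕ} (hn : 3 ≤ n) (hk : 3 ≤ k) (hodd : Odd k)
    (G : SimpleGraph (Fin n)) (hT : G.IsTree)
    (u v w : Fin n) (huw : G.Adj u w) (hleaf : ∀ z, G.Adj u z → z = w)
    (hwv : G.Adj w v) (hvu : v ≠ u)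
    (y : Fin n → ℂ)
    (hy : y = fun z => if z = u then 1
      else if z = v then Complex.exp (Real.pi * Complex.I / (k - 1))
      else if z = w then -1 - Complex.exp (Real.pi * Complex.I / (k - 1)) else 0) :
    y ≠ 0 ∧ ∀ z : Fin n,
      MvPolynomial.eval y (MvPolynomial.pderiv z (steinerFormK G k)) = 0 :=
  stmt4_general hk hodd G hT u v w huw hwv hvu y hy
end

section
/- Let T be a tree on n vertices. The Steiner 3-form p = p_T^{(3)} factors as p = s·g, where s = Σ_r x_r and g = 3 Σ_{i<j} d_T(i,j) x_i x_j. In particular, s divides p in ℂ[x_1,...,x_n]. -/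
open MvPolynomial Finset

/-!
In a tree, an edge lies on the path between two vertices exactly when deleting it separates them,
and deleting one edge leaves at most two components. Hence every edge lies on zero or two of the
three paths joining `i`, `j`, `k`, i.e. the third path is the symmetric difference of the other two.
The smallest connected subgraph containing `{i, j, k}` is the union of these paths, so
`2 d(i, j, k) = d(i, j) + d(j, k) + d(i, k)`. Substituting this into the cubic form and expanding
gives `2 p = 3 s D` with `D = ∑ i, ∑ j, d(i, j) x_i x_j = 2 g / 3`.
-/

open scoped symmDiff

namespace Finset

theorem two_mul_card_union {α : Type*} [DecidableEq α] (s t : Finset α) :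
    2 * #(s ∪ t) = #s + #t + #(s ∆ t) := by
  rw [Finset.symmDiff_def, card_union_of_disjoint (s := s \ t) disjoint_sdiff_sdiff, two_mul]
  nth_rw 1 [← card_sdiff_add_card s t, union_comm, ← card_sdiff_add_card t s]
  ring

variable {ι : Type*} [Fintype ι]

theorem sum_sum_eq_two_nsmul_sum_sum_lt {M : Type*} [AddCommMonoid M] [LinearOrder ι]
    (f : ι → ι → M) (hf : ∀ i j, f i j = f j i) (hdiag : ∀ i, f i i = 0) :
    ∑ i, ∑ j, f i j = 2 • ∑ i, ∑ j, if i < j then f i j else 0 := by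
  have hsplit (i j : ι) : f i j = (if i < j then f i j else 0) + if j < i then f j i else 0 := by
    rcases lt_trichotomy i j with h | rfl | h
    · simp [h, h.not_gt]
    · simp [hdiag]
    · simp [h, h.not_gt, hf i j]
  calc ∑ i, ∑ j, f i j
      = ∑ i, ∑ j, ((if i < j then f i j else 0) + if j < i then f j i else 0) :=
        sum_congr rfl fun i _ => sum_congr rfl fun j _ => hsplit i j
    _ = 2 • ∑ i, ∑ j, if i < j then f i j else 0 := by
        simp only [sum_add_distrib]
        rw [sum_comm (f := fun i j => if j < i then f j i else 0), two_nsmul]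

theorem sum_sum_sum_pairwise_mul {R : Type*} [CommSemiring R] (a : ι → ι → R) (x : ι → R) :
    ∑ i, ∑ j, ∑ k, (a i j + a j k + a i k) * (x i * x j * x k) =
      3 * (∑ r, x r) * ∑ i, ∑ j, a i j * x i * x j := by
  have hfirst : ∑ i, ∑ j, ∑ k, a i j * (x i * x j * x k) =
      (∑ r, x r) * ∑ i, ∑ j, a i j * x i * x j := by
    simp_rw [mul_comm (∑ r, x r), sum_mul, mul_sum]
    exact sum_congr rfl fun i _ => sum_congr rfl fun j _ => sum_congr rfl fun k _ => by ring
  have hsecond : ∑ i, ∑ j, ∑ k, a j k * (x i * x j * x k) =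
      (∑ r, x r) * ∑ i, ∑ j, a i j * x i * x j := by
    simp_rw [sum_mul, mul_sum]
    exact sum_congr rfl fun i _ => sum_congr rfl fun j _ => sum_congr rfl fun k _ => by ring
  have hthird : ∑ i, ∑ j, ∑ k, a i k * (x i * x j * x k) =
      ∑ i, ∑ j, ∑ k, a i j * (x i * x j * x k) := by
    refine sum_congr rfl fun i _ => ?_
    rw [sum_comm]
    exact sum_congr rfl fun j _ => sum_congr rfl fun k _ => by ring
  simp only [add_mul, sum_add_distrib, hthird, hfirst, hsecond]
  ring

end Finset

namespace SimpleGraph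

variable {V : Type*} {G : SimpleGraph V}

theorem IsAcyclic.mem_edges_iff_not_reachable_deleteEdges (hG : G.IsAcyclic) {a b : V}
    {p : G.Walk a b} (hp : p.IsPath) {e : Sym2 V} :
    e ∈ p.edges ↔ ¬ (G.deleteEdges {e}).Reachable a b := by
  refine ⟨fun he hr => ?_, p.mem_edges_of_not_reachable_deleteEdges⟩
  obtain ⟨q, hq⟩ := hr.exists_isPath
  have hqp : q.mapLe (G.deleteEdges_le {e}) = p :=
    congrArg Subtype.val ((hG.subsingleton_path a b).elim ⟨_, hq.mapLe _⟩ ⟨p, hp⟩)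
  rw [← hqp, Walk.edges_mapLe_eq_edges] at he
  simpa using q.edges_subset_edgeSet he

theorem Walk.reachable_deleteEdges_or {u v a x : V} (w : G.Walk a x)
    (ha : (G.deleteEdges {s(u, v)}).Reachable u a ∨ (G.deleteEdges {s(u, v)}).Reachable v a) :
    (G.deleteEdges {s(u, v)}).Reachable u x ∨ (G.deleteEdges {s(u, v)}).Reachable v x := by
  induction w with
  | nil => exact ha
  | @cons a c x h p ih =>
    refine ih ?_
    by_cases he : s(a, c) = s(u, v)
    · rcases Sym2.eq_iff.mp he with ⟨-, rfl⟩ | ⟨-, rfl⟩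
      exacts [.inr .rfl, .inl .rfl]
    · have hac : (G.deleteEdges {s(u, v)}).Reachable a c :=
        (deleteEdges_adj.mpr ⟨h, he⟩).reachable
      exact ha.imp (·.trans hac) (·.trans hac)

theorem Preconnected.reachable_deleteEdges_iff (hG : G.Preconnected) (u v a b : V) :
    (G.deleteEdges {s(u, v)}).Reachable a b ↔
      ((G.deleteEdges {s(u, v)}).Reachable u a ↔ (G.deleteEdges {s(u, v)}).Reachable u b) := by
  have hside (x : V) := (hG u x).some.reachable_deleteEdges_or (u := u) (v := v) (.inl .rfl)
  refine ⟨fun hab => ⟨(·.trans hab), (·.trans hab.symm)⟩, fun h => ?_⟩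
  by_cases hua : (G.deleteEdges {s(u, v)}).Reachable u a
  · exact hua.symm.trans (h.mp hua)
  · exact ((hside a).resolve_left hua).symm.trans ((hside b).resolve_left (mt h.mpr hua))

theorem IsTree.mem_edges_iff_xor (hT : G.IsTree) {i j k : V} {P : G.Walk i j} {Q : G.Walk j k}
    {R : G.Walk i k} (hP : P.IsPath) (hQ : Q.IsPath) (hR : R.IsPath) (e : Sym2 V) :
    e ∈ R.edges ↔ Xor (e ∈ P.edges) (e ∈ Q.edges) := by
  induction e using Sym2.ind with
  | _ u v =>
  rw [hT.isAcyclic.mem_edges_iff_not_reachable_deleteEdges hP,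
    hT.isAcyclic.mem_edges_iff_not_reachable_deleteEdges hQ,
    hT.isAcyclic.mem_edges_iff_not_reachable_deleteEdges hR]
  have hside := hT.connected.preconnected.reachable_deleteEdges_iff u v
  rw [hside i j, hside j k, hside i k, xor_def]
  tauto

theorem IsAcyclic.edges_subset_edgeSet_of_connected (hG : G.IsAcyclic) {a b : V}
    {p : G.Walk a b} (hp : p.IsPath) {H : G.Subgraph} (hH : H.Connected)
    (ha : a ∈ H.verts) (hb : b ∈ H.verts) : {e | e ∈ p.edges} ⊆ H.edgeSet := by
  intro e he
  obtain ⟨w, hw⟩ := (H.connected_iff_forall_exists_walk_subgraph.mp hH).2 ha hb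
  have hew := w.mem_edges_of_not_reachable_deleteEdges
    ((hG.mem_edges_iff_not_reachable_deleteEdges hp).mp he)
  exact Subgraph.edgeSet_mono hw (by simpa using hew)

theorem IsAcyclic.steinerDist_eq_card_union_edges [Finite V] [DecidableEq V] (hG : G.IsAcyclic)
    {i j k : V} {P : G.Walk i j} {Q : G.Walk j k} (hP : P.IsPath) (hQ : Q.IsPath) :
    steinerDist G {i, j, k} = #(P.edges.toFinset ∪ Q.edges.toFinset) := by
  set H := (P.append Q).toSubgraph
  have hH : H.edgeSet = ↑(P.edges.toFinset ∪ Q.edges.toFinset) := by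
    ext e; simp [H]
  refine le_antisymm (Nat.sInf_le ⟨H, (P.append Q).toSubgraph_connected, ?_, ?_⟩) ?_
  · simp [Set.insert_subset_iff, H]
  · rw [hH, Set.ncard_coe_finset]
  · refine le_csInf ⟨_, H, (P.append Q).toSubgraph_connected, ?_, rfl⟩ ?_
    · simp [Set.insert_subset_iff, H]
    rintro _ ⟨H', hH', hijk, rfl⟩
    simp only [Set.insert_subset_iff, Set.singleton_subset_iff] at hijk
    rw [← Set.ncard_coe_finset, coe_union]
    refine Set.ncard_le_ncard (Set.union_subset ?_ ?_) (Set.toFinite _)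
    · simpa using hG.edges_subset_edgeSet_of_connected hP hH' hijk.1 hijk.2.1
    · simpa using hG.edges_subset_edgeSet_of_connected hQ hH' hijk.2.1 hijk.2.2

theorem IsTree.two_mul_steinerDist [Finite V] (hT : G.IsTree) (i j k : V) :
    2 * steinerDist G {i, j, k} = G.dist i j + G.dist j k + G.dist i k := by
  classical
  obtain ⟨P, hP, hPd⟩ := hT.connected.exists_path_of_dist i j
  obtain ⟨Q, hQ, hQd⟩ := hT.connected.exists_path_of_dist j k
  obtain ⟨R, hR, hRd⟩ := hT.connected.exists_path_of_dist i k
  have hRPQ : R.edges.toFinset = P.edges.toFinset ∆ Q.edges.toFinset := by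
    ext e
    simp [hT.mem_edges_iff_xor hP hQ hR e, Finset.mem_symmDiff, xor_def]
  have hcard {a b : V} {p : G.Walk a b} (hp : p.IsPath) : #p.edges.toFinset = p.length := by
    rw [List.toFinset_card_of_nodup hp.edges_nodup, Walk.length_edges]
  rw [hT.isAcyclic.steinerDist_eq_card_union_edges hP hQ, ← hPd, ← hQd, ← hRd, ← hcard hP,
    ← hcard hQ, ← hcard hR, hRPQ, Finset.two_mul_card_union]

end SimpleGraph

theorem stmt6 {n : ℕ} (G : SimpleGraph (Fin n)) (hT : G.IsTree) :
    steinerForm3 G = sPoly n * gPoly G ∧ sPoly n ∣ steinerForm3 G := by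
  set D : MvPolynomial (Fin n) ℂ := ∑ i, ∑ j, C (G.dist i j : ℂ) * X i * X j
  have hform : 2 * steinerForm3 G = 3 * sPoly n * D := by
    have hterm (i j k : Fin n) : 2 * (C (steinerDist G {i, j, k} : ℂ) * X i * X j * X k) =
        (C (G.dist i j : ℂ) + C (G.dist j k : ℂ) + C (G.dist i k : ℂ)) * (X i * X j * X k) := by
      have h : (2 : ℂ) * steinerDist G {i, j, k} = G.dist i j + G.dist j k + G.dist i k := by
        exact_mod_cast hT.two_mul_steinerDist i j k
      rw [← map_add, ← map_add, ← h, map_mul, map_ofNat]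
      ring
    simp_rw [steinerForm3, mul_sum, hterm]
    exact sum_sum_sum_pairwise_mul _ _
  have hg : 2 * gPoly G = 3 * D := by
    have hD : D = 2 • ∑ i, ∑ j, if i < j then C (G.dist i j : ℂ) * X i * X j else 0 :=
      sum_sum_eq_two_nsmul_sum_sum_lt _ (fun i j => by rw [G.dist_comm]; ring) (fun i => by simp)
    rw [gPoly, hD, nsmul_eq_mul, Nat.cast_ofNat]
    ring
  have hfactor : steinerForm3 G = sPoly n * gPoly G :=
    mul_left_cancel₀ two_ne_zero (by rw [hform, mul_left_comm, hg, sPoly]; ring)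
  exact ⟨hfactor, hfactor ▸ dvd_mul_right _ _⟩
end

section
/- Let T be a tree on n ≥ 2 vertices and v ∈ ℂ^n a Steiner nullvector of order 3, i.e., a common zero of all partial derivatives of the Steiner 3-form p_T^{(3)}. Then the sum of the coordinates of v equals 0. -/
open MvPolynomial Finset

/-!
In a tree an edge `ab` splits the vertices into those nearer to `a` and those nearer to `b`, and
it lies on the path from `x` to `y` exactly when it separates `x` from `y`. Two consequences:
every edge of the union of the paths from `i` to `j` and to `k` lies on exactly two of the three
paths joining `i, j, k`, whence `2 d(i, j, k) = d(i, j) + d(i, k) + d(j, k)`; and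
`∑ₑ σₑ(x) σₑ(y) = |E| - 2 d(x, y)`, where `σₑ = ±1` records the side of `e`.

Put `s = ∑ vᵢ`, `w = D v` for the distance matrix `D`, and `Q = vᵀ D v`. By the first fact,
`∂ᵣ p = 0` reads `2 s w_r + Q = 0`; pairing with `v` gives `3 s Q = 0`, so if `s ≠ 0` then
`Q = 0` and `D v = 0`. Summing `σₑ(y) (w_a - w_b)` over the edges `e = ab` and using the second
fact gives `|E| s = 2 w_y`, so `D v = 0` forces `s = 0`.
-/

theorem Set.two_mul_ncard_union {α : Type*} {s t : Set α} (hs : s.Finite) (ht : t.Finite) :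
    2 * (s ∪ t).ncard = s.ncard + t.ncard + (symmDiff s t).ncard := by
  have hunion := Set.ncard_union_add_ncard_inter s t hs ht
  have hsdiff := Set.ncard_sdiff_add_ncard_of_subset (s := s ∩ t)
    (Set.inter_subset_left.trans Set.subset_union_left) (hs.union ht)
  rw [show symmDiff s t = (s ∪ t) \ (s ∩ t) from symmDiff_eq_sup_sdiff_inf s t]
  omega

theorem MvPolynomial.eval_pderiv_sum_cubic {σ R : Type*} [Fintype σ] [DecidableEq σ] [CommRing R]
    (c : σ → σ → σ → R) (hc₁₂ : ∀ i j k, c i j k = c j i k) (hc₂₃ : ∀ i j k, c i j k = c i k j)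
    (v : σ → R) (r : σ) :
    eval v (pderiv r (∑ i, ∑ j, ∑ k, C (c i j k) * X i * X j * X k)) =
      3 * ∑ j, ∑ k, c r j k * v j * v k := by
  have hc₁₃ : ∀ i j, c i j r = c r i j := fun i j => (hc₂₃ _ _ _).trans (hc₁₂ _ _ _)
  simp only [map_sum, Derivation.leibniz, pderiv_C, pderiv_X, map_add, map_mul, smul_eq_mul,
    eval_X, eval_C, Pi.single_apply, mul_ite, mul_one, mul_zero, add_zero, mul_add, sum_add_distrib,
    sum_ite_eq', mem_univ, ↓reduceIte, sum_ite_irrel, sum_const_zero, hc₁₃, ← hc₁₂ _ r]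
  simp only [Finset.mul_sum, ← Finset.sum_add_distrib]
  exact sum_congr rfl fun _ _ => sum_congr rfl fun _ _ => by ring

theorem sum_eq_zero_or_eq_zero_of_forall_two_mul_mul_sum_add_eq_zero {ι K : Type*} [Fintype ι]
    [Field K] [CharZero K] {v w : ι → K}
    (h : ∀ r, 2 * w r * ∑ k, v k + ∑ j, v j * w j = 0) : ∑ k, v k = 0 ∨ w = 0 := by
  have hsum : 3 * ((∑ k, v k) * ∑ j, v j * w j) = 0 := by
    calc 3 * ((∑ k, v k) * ∑ j, v j * w j)
        = 2 * (∑ k, v k) * (∑ r, v r * w r) + (∑ r, v r) * ∑ j, v j * w j := by ring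
      _ = ∑ r, v r * (2 * w r * ∑ k, v k + ∑ j, v j * w j) := by
          rw [mul_sum (a := 2 * ∑ k, v k), sum_mul (s := univ) (f := v), ← sum_add_distrib]
          exact sum_congr rfl fun _ _ => by ring
      _ = 0 := sum_eq_zero fun r _ => by rw [h r, mul_zero]
  by_cases hs : ∑ k, v k = 0
  · exact Or.inl hs
  have hQ : ∑ j, v j * w j = 0 := by simpa [hs] using hsum
  exact Or.inr (funext fun r => by simpa [hs, hQ] using h r)

theorem steinerDist_eq_ncard_edgeSet {V : Type*} [Finite V] {G : SimpleGraph V} {S : Set V}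
    {H₀ : G.Subgraph} (h₀ : H₀.Connected) (hS : S ⊆ H₀.verts)
    (hle : ∀ H : G.Subgraph, H.Connected → S ⊆ H.verts → H₀ ≤ H) :
    steinerDist G S = H₀.edgeSet.ncard :=
  le_antisymm (Nat.sInf_le ⟨H₀, h₀, hS, rfl⟩) <|
    le_csInf ⟨_, H₀, h₀, hS, rfl⟩ fun _ ⟨H, hH, hSH, hm⟩ =>
      hm ▸ Set.ncard_le_ncard (SimpleGraph.Subgraph.edgeSet_mono (hle H hH hSH)) (Set.toFinite _)

theorem eval_pderiv_steinerForm3 {m : ℕ} (G : SimpleGraph (Fin m)) (v : Fin m → ℂ) (r : Fin m) :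
    MvPolynomial.eval v (MvPolynomial.pderiv r (steinerForm3 G)) =
      3 * ∑ j, ∑ k, (steinerDist G {r, j, k} : ℂ) * v j * v k :=
  MvPolynomial.eval_pderiv_sum_cubic _ (fun _ _ _ => by rw [Set.insert_comm])
    (fun _ _ _ => by rw [Set.pair_comm]) v r

namespace SimpleGraph

variable {V : Type*} {G : SimpleGraph V}

theorem Walk.IsTrail.ncard_edgeSet {u v : V} {p : G.Walk u v} (hp : p.IsTrail) :
    p.edgeSet.ncard = p.length := by
  classical
  have : p.edgeSet = ↑p.edges.toFinset := by ext; simp [Walk.edgeSet]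
  rw [this, Set.ncard_coe_finset, List.toFinset_card_of_nodup hp.edges_nodup, Walk.length_edges]

theorem Walk.dist_le_length_of_mem_support {u v m : V} (p : G.Walk u v) (hm : m ∈ p.support) :
    G.dist u m ≤ p.length := by
  classical
  exact (dist_le _).trans (p.length_takeUntil_le_length hm)

/-- For an edge `e` of a tree, `-1` if `e` separates `x` from `y` and `1` otherwise. -/
noncomputable def separationSign (G : SimpleGraph V) (x y : V) : Sym2 V → ℤ :=
  Sym2.lift ⟨fun a b => ((G.dist x a : ℤ) - G.dist x b) * ((G.dist y a : ℤ) - G.dist y b),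
    fun _ _ => by ring⟩

namespace IsTree

theorem eq_of_isPath (hT : G.IsTree) {u v : V} {p q : G.Walk u v} (hp : p.IsPath)
    (hq : q.IsPath) : p = q :=
  (hT.existsUnique_path u v).unique hp hq

theorem length_eq_dist (hT : G.IsTree) {u v : V} {p : G.Walk u v} (hp : p.IsPath) :
    p.length = G.dist u v := by
  obtain ⟨q, hq, hql⟩ := hT.connected.exists_path_of_dist u v
  rw [hT.eq_of_isPath hp hq, hql]

theorem dist_add_dist_of_mem_support (hT : G.IsTree) {u v m : V} {p : G.Walk u v}
    (hp : p.IsPath) (hm : m ∈ p.support) : G.dist u m + G.dist m v = G.dist u v := by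
  classical
  rw [← hT.length_eq_dist (hp.takeUntil hm), ← hT.length_eq_dist (hp.dropUntil hm),
    ← hT.length_eq_dist hp, ← Walk.length_append, Walk.take_spec]

theorem toSubgraph_le (hT : G.IsTree) {u v : V} {p : G.Walk u v} (hp : p.IsPath)
    {H : G.Subgraph} (hH : H.Preconnected) (hu : u ∈ H.verts) (hv : v ∈ H.verts) :
    p.toSubgraph ≤ H := by
  classical
  obtain ⟨w, hw⟩ := (Subgraph.preconnected_iff_forall_exists_walk_subgraph H).mp hH hu hv
  rw [hT.eq_of_isPath hp w.bypass_isPath]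
  exact Walk.toSubgraph_bypass_le_toSubgraph.trans hw

theorem eq_and_eq_of_adj_of_dist_lt (hT : G.IsTree) {a b x y : V} (hab : G.Adj a b)
    (hxy : G.Adj x y) (hx : G.dist x b < G.dist x a) (hy : G.dist y a < G.dist y b) :
    x = b ∧ y = a := by
  obtain ⟨p, -, hpl⟩ := hT.connected.exists_path_of_dist x b
  obtain ⟨q, hq, hql⟩ := hT.connected.exists_path_of_dist y a
  have hyb : G.dist y b = G.dist x b + 1 := by
    have hxab := hT.dist_eq_dist_add_one_of_adj x hab
    have hyab := hT.dist_eq_dist_add_one_of_adj y hab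
    have haxy := hT.dist_eq_dist_add_one_of_adj a hxy
    have hbxy := hT.dist_eq_dist_add_one_of_adj b hxy
    rw [dist_comm (u := a) (v := x), dist_comm (u := a) (v := y)] at haxy
    rw [dist_comm (u := b) (v := x), dist_comm (u := b) (v := y)] at hbxy
    omega
  have hp : (Walk.cons hxy.symm p).IsPath :=
    Walk.isPath_of_length_eq_dist _ (by rw [Walk.length_cons, hpl, hyb])
  have hbq : b ∉ q.support := fun hb => by
    have := q.dist_le_length_of_mem_support hb
    omega
  -- `y, x, …, b` is a shortest path to `b`; the one to `a` avoids `b`, so this one meets `a`.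
  have ha := hT.isAcyclic.mem_support_of_ne_mem_support_of_adj_of_isPath hp hq hab.symm hbq
  rw [Walk.support_cons, List.mem_cons] at ha
  rcases ha with rfl | ha
  · have : G.dist x a = 1 := dist_eq_one_iff_adj.mpr hxy
    exact ⟨hT.connected.dist_eq_zero_iff.mp (show G.dist x b = 0 by omega), rfl⟩
  · have := p.dist_le_length_of_mem_support ha
    omega

theorem dist_lt_iff_of_adj_of_ne (hT : G.IsTree) {a b x y : V} (hab : G.Adj a b)
    (hxy : G.Adj x y) (hne : s(x, y) ≠ s(a, b)) :
    G.dist x a < G.dist x b ↔ G.dist y a < G.dist y b := by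
  have hx := hT.dist_eq_dist_add_one_of_adj x hab
  have hy := hT.dist_eq_dist_add_one_of_adj y hab
  constructor
  · intro h
    by_contra h'
    obtain ⟨rfl, rfl⟩ := hT.eq_and_eq_of_adj_of_dist_lt hab.symm hxy h (by omega)
    exact hne rfl
  · intro h
    by_contra h'
    obtain ⟨rfl, rfl⟩ := hT.eq_and_eq_of_adj_of_dist_lt hab hxy (by omega) h
    exact hne Sym2.eq_swap

theorem mem_edges_iff (hT : G.IsTree) {a b x y : V} (hab : G.Adj a b) {p : G.Walk x y}
    (hp : p.IsPath) :
    s(a, b) ∈ p.edges ↔ ¬(G.dist x a < G.dist x b ↔ G.dist y a < G.dist y b) := by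
  refine ⟨fun he => ?_, fun h => ?_⟩
  · have ha := hT.dist_add_dist_of_mem_support hp (p.fst_mem_support_of_mem_edges he)
    have hb := hT.dist_add_dist_of_mem_support hp (p.snd_mem_support_of_mem_edges he)
    have hx := hT.dist_eq_dist_add_one_of_adj x hab
    have hy := hT.dist_eq_dist_add_one_of_adj y hab
    rw [dist_comm (u := a)] at ha
    rw [dist_comm (u := b)] at hb
    omega
  · clear hp
    induction p with
    | nil => exact absurd Iff.rfl h
    | @cons x x' y hxx' q ih =>
      rw [Walk.edges_cons, List.mem_cons]
      by_cases he : s(x, x') = s(a, b)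
      · exact Or.inl he.symm
      · exact Or.inr (ih (by rwa [← hT.dist_lt_iff_of_adj_of_ne hab hxx' he]))

theorem separationSign_eq [DecidableEq V] (hT : G.IsTree) {x y : V} {p : G.Walk x y}
    (hp : p.IsPath) {e : Sym2 V} (he : e ∈ G.edgeSet) :
    G.separationSign x y e = if e ∈ p.edges then -1 else 1 := by
  induction e using Sym2.ind with
  | h a b =>
    rw [mem_edgeSet] at he
    simp only [separationSign, Sym2.lift_mk]
    have hx : (G.dist x a : ℤ) - G.dist x b = 1 ∨ (G.dist x a : ℤ) - G.dist x b = -1 := by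
      have := hT.dist_eq_dist_add_one_of_adj x he
      omega
    have hy : (G.dist y a : ℤ) - G.dist y b = 1 ∨ (G.dist y a : ℤ) - G.dist y b = -1 := by
      have := hT.dist_eq_dist_add_one_of_adj y he
      omega
    split_ifs with h <;> rw [hT.mem_edges_iff he hp] at h <;>
      rcases hx with hx | hx <;> rcases hy with hy | hy <;> rw [hx, hy] <;> first | rfl | omega

theorem sum_separationSign (hT : G.IsTree) [Fintype G.edgeSet] (x y : V) :
    ∑ e ∈ G.edgeFinset, G.separationSign x y e = #G.edgeFinset - 2 * G.dist x y := by
  classical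
  obtain ⟨p, hp, hpl⟩ := hT.connected.exists_path_of_dist x y
  have hpath : G.edgeFinset.filter (· ∈ p.edges) = p.edges.toFinset := by
    ext e
    simpa using fun h => p.edges_subset_edgeSet h
  have hsign : ∀ e ∈ G.edgeFinset, G.separationSign x y e = 1 - 2 * if e ∈ p.edges then 1 else 0 :=
    fun e he => by rw [hT.separationSign_eq hp (mem_edgeFinset.mp he)]; split_ifs <;> norm_num
  rw [sum_congr rfl hsign, sum_sub_distrib, ← mul_sum, sum_boole, hpath,
    List.toFinset_card_of_nodup hp.edges_nodup, Walk.length_edges, hpl]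
  simp

theorem sum_eq_zero_of_forall_sum_dist_mul_eq_zero (hT : G.IsTree) [Fintype V] [Nontrivial V]
    {K : Type*} [Field K] [CharZero K] {v : V → K} (hv : ∀ a, ∑ x, (G.dist x a : K) * v x = 0) :
    ∑ x, v x = 0 := by
  classical
  obtain ⟨y⟩ := (inferInstance : Nonempty V)
  have hedge : ∀ e ∈ G.edgeFinset, ∑ x, v x * (G.separationSign x y e : K) = 0 := by
    intro e _
    induction e using Sym2.ind with
    | h a b =>
      calc ∑ x, v x * (G.separationSign x y s(a, b) : K)
          = ((G.dist y a : K) - G.dist y b) *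
              (∑ x, (G.dist x a : K) * v x - ∑ x, (G.dist x b : K) * v x) := by
            simp only [separationSign, Sym2.lift_mk, mul_sum, ← sum_sub_distrib]
            push_cast
            exact sum_congr rfl fun _ _ => by ring
        _ = 0 := by rw [hv a, hv b, sub_self, mul_zero]
  have hsum := sum_eq_zero hedge
  rw [sum_comm] at hsum
  simp only [← mul_sum, ← Int.cast_sum, hT.sum_separationSign] at hsum
  have hcard : (#G.edgeFinset : K) ≠ 0 := by
    have := hT.card_edgeFinset
    have := Fintype.one_lt_card (α := V)
    exact Nat.cast_ne_zero.mpr (by omega)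
  refine (mul_eq_zero.mp ?_).resolve_left hcard
  have hexpand : ∑ x, v x * ((#G.edgeFinset : K) - 2 * G.dist x y) =
      #G.edgeFinset * ∑ x, v x - 2 * ∑ x, (G.dist x y : K) * v x := by
    rw [mul_sum, mul_sum, ← sum_sub_distrib]
    exact sum_congr rfl fun _ _ => by ring
  push_cast at hsum
  linear_combination hsum - hexpand + 2 * hv y

theorem two_mul_steinerDist_triple [Finite V] (hT : G.IsTree) (i j k : V) :
    2 * steinerDist G {i, j, k} = G.dist i j + G.dist i k + G.dist j k := by
  obtain ⟨P, hP, hPl⟩ := hT.connected.exists_path_of_dist i j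
  obtain ⟨R, hR, hRl⟩ := hT.connected.exists_path_of_dist i k
  obtain ⟨Q, hQ, hQl⟩ := hT.connected.exists_path_of_dist j k
  have hsd : steinerDist G {i, j, k} = (P.edgeSet ∪ R.edgeSet).ncard := by
    rw [← Walk.edgeSet_toSubgraph, ← Walk.edgeSet_toSubgraph, ← Subgraph.edgeSet_sup]
    refine steinerDist_eq_ncard_edgeSet (Subgraph.connected_sup
      P.toSubgraph_connected.preconnected R.toSubgraph_connected.preconnected ⟨i, by simp⟩)
      (by simp [Set.insert_subset_iff]) fun H hH hS => sup_le ?_ ?_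
    · exact hT.toSubgraph_le hP hH.preconnected (hS (by simp)) (hS (by simp))
    · exact hT.toSubgraph_le hR hH.preconnected (hS (by simp)) (hS (by simp))
  have hQ' : Q.edgeSet = symmDiff P.edgeSet R.edgeSet := by
    ext e
    induction e using Sym2.ind with
    | h a b =>
      by_cases hab : G.Adj a b
      · simp only [Walk.mem_edgeSet, Set.mem_symmDiff, hT.mem_edges_iff hab hP,
          hT.mem_edges_iff hab hR, hT.mem_edges_iff hab hQ]
        tauto
      · have h : ∀ {u w : V} (p : G.Walk u w), s(a, b) ∉ p.edges :=
          fun p h => hab (p.adj_of_mem_edges h)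
        simp [Set.mem_symmDiff, h]
  rw [hsd, Set.two_mul_ncard_union (Set.toFinite P.edgeSet) (Set.toFinite R.edgeSet), ← hQ',
    hP.isTrail.ncard_edgeSet, hR.isTrail.ncard_edgeSet, hQ.isTrail.ncard_edgeSet, hPl, hRl, hQl]

end IsTree

end SimpleGraph

theorem SimpleGraph.IsTree.two_mul_eval_pderiv_steinerForm3 {m : ℕ} {G : SimpleGraph (Fin m)}
    (hT : G.IsTree) (v : Fin m → ℂ) (r : Fin m) :
    2 * MvPolynomial.eval v (MvPolynomial.pderiv r (steinerForm3 G)) =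
      3 * (2 * (∑ j, (G.dist j r : ℂ) * v j) * ∑ k, v k +
        ∑ j, v j * ∑ k, (G.dist k j : ℂ) * v k) := by
  have htriple : ∀ j k, 2 * ((steinerDist G {r, j, k} : ℂ) * v j * v k) =
      (G.dist j r : ℂ) * v j * v k + v j * ((G.dist k r : ℂ) * v k) +
        v j * ((G.dist k j : ℂ) * v k) := fun j k => by
    have := congrArg (Nat.cast : ℕ → ℂ) (hT.two_mul_steinerDist_triple r j k)
    push_cast at this
    rw [dist_comm (u := j) (v := r), dist_comm (u := k) (v := r), dist_comm (u := k) (v := j)]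
    linear_combination (v j * v k) * this
  calc 2 * MvPolynomial.eval v (MvPolynomial.pderiv r (steinerForm3 G))
      = 3 * (2 * ∑ j, ∑ k, (steinerDist G {r, j, k} : ℂ) * v j * v k) := by
        rw [eval_pderiv_steinerForm3]
        ring
    _ = 3 * ∑ j, ∑ k, ((G.dist j r : ℂ) * v j * v k + v j * ((G.dist k r : ℂ) * v k) +
          v j * ((G.dist k j : ℂ) * v k)) := by
        simp_rw [mul_sum (a := (2 : ℂ)), htriple]
    _ = _ := by
        simp only [sum_add_distrib, ← mul_sum, ← sum_mul]
        ring

theorem stmt9 {n : ℕ} (G : SimpleGraph (Fin (n + 2))) (hT : G.IsTree)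
    (v : Fin (n + 2) → ℂ)
    (hv : ∀ r, MvPolynomial.eval v (MvPolynomial.pderiv r (steinerForm3 G)) = 0) :
    ∑ i, v i = 0 := by
  refine (sum_eq_zero_or_eq_zero_of_forall_two_mul_mul_sum_add_eq_zero
    (w := fun r => ∑ x, (G.dist x r : ℂ) * v x) fun r => ?_).elim id
    fun hw => hT.sum_eq_zero_of_forall_sum_dist_mul_eq_zero (congrFun hw)
  have hrow := hT.two_mul_eval_pderiv_steinerForm3 v r
  rw [hv r] at hrow
  linear_combination (-1 / 3 : ℂ) * hrow
end

section
/- Let T be a tree on n vertices with distance matrix D, let d_j denote the degree of vertex j and a_{ij} the indicator that ij is an edge. Then D is invertible and the entries of D^{-1} are given by d*_{ij} = (2−d_i)(2−d_j)/(2(n−1)) − d_i/2 if i = j, and d*_{ij} = (2−d_i)(2−d_j)/(2(n−1)) + a_{ij}/2 if i ≠ j. -/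
open MvPolynomial Finset

/-!
Write `τ j = 2 - deg j` and `L` for the Laplacian; the claimed inverse is
`τ τᵀ / (2(n-1)) - L / 2`.
Root the tree at `i`: every vertex `j ≠ i` has exactly one neighbour closer to `i`, and all its
other neighbours are one step farther away. Summing distances over the neighbours of `k` gives
`(D L)_{ik} = τ_k - 2 δ_{ik}`, and charging each edge to its endpoint farther from `i` gives
`D τ = (n - 1) 𝟙`. Together, `D (τ τᵀ / (2(n-1)) - L / 2) = 1`.
-/

namespace SimpleGraph

variable {V : Type*} {G : SimpleGraph V}

noncomputable def distMatrix (R : Type*) [NatCast R] (G : SimpleGraph V) : Matrix V V R :=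
  Matrix.of fun i j => (G.dist i j : R)

theorem Connected.exists_adj_dist_add_one_eq (hG : G.Connected) {i j : V} (hij : i ≠ j) :
    ∃ k, G.Adj j k ∧ G.dist i k + 1 = G.dist i j := by
  obtain ⟨p, -, hp⟩ := hG.exists_path_of_dist i j
  have hnil : ¬p.Nil := Walk.not_nil_of_ne hij
  refine ⟨p.penultimate, (Walk.adj_penultimate hnil).symm, ?_⟩
  have hle := dist_le p.dropLast
  have hlen := Walk.length_dropLast_add_one hnil
  have hpos := hG.pos_dist_of_ne hij
  rcases (Walk.adj_penultimate hnil).diff_dist_adj (u := i) with h | h | h <;> omega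

theorem IsAcyclic.eq_penultimate_of_dist_add_one_eq (hG : G.IsAcyclic) {i j k : V}
    {p : G.Walk i j} (hp : p.IsPath) (hjk : G.Adj j k) (hd : G.dist i k + 1 = G.dist i j) :
    k = p.penultimate := by
  classical
  obtain ⟨q, hq, hql⟩ := (Reachable.of_dist_ne_zero (by omega : G.dist i j ≠ 0)).trans
    hjk.reachable |>.exists_path_of_dist
  have hj : j ∉ q.support := fun hj => by
    have := dist_le (q.takeUntil j hj)
    have := q.length_takeUntil_le_length hj
    omega
  exact hG.eq_penultimate_of_adj_end hp hjk
    (hG.mem_support_of_ne_mem_support_of_adj_of_isPath hp hq hjk hj)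

variable [Fintype V] [DecidableRel G.Adj]

theorem IsTree.card_filter_neighborFinset_dist_add_one_eq [DecidableEq V] (hG : G.IsTree)
    (i j : V) : #{k ∈ G.neighborFinset j | G.dist i k + 1 = G.dist i j} =
      if i = j then 0 else 1 := by
  split_ifs with hij
  · subst hij
    simp
  · obtain ⟨p, hp, -⟩ := hG.connected.exists_path_of_dist i j
    obtain ⟨k, hk, hkd⟩ := hG.connected.exists_adj_dist_add_one_eq hij
    refine card_eq_one.2 ⟨k, eq_singleton_iff_unique_mem.2 ⟨by simp [hk, hkd], ?_⟩⟩
    intro k' hk'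
    rw [mem_filter, mem_neighborFinset] at hk'
    rw [hG.isAcyclic.eq_penultimate_of_dist_add_one_eq hp hk'.1 hk'.2,
      hG.isAcyclic.eq_penultimate_of_dist_add_one_eq hp hk hkd]

theorem IsTree.sum_neighborFinset_ite_dist_add_one_eq [DecidableEq V] {M : Type*}
    [AddCommMonoid M] (hG : G.IsTree) (i j : V) (c : M) :
    ∑ k ∈ G.neighborFinset j, (if G.dist i k + 1 = G.dist i j then c else 0) =
      if i = j then 0 else c := by
  rw [← sum_filter, sum_const, hG.card_filter_neighborFinset_dist_add_one_eq]
  split_ifs <;> simp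

theorem IsTree.sum_neighborFinset_dist_add [DecidableEq V] (hG : G.IsTree) (i k : V) :
    ∑ j ∈ G.neighborFinset k, G.dist i j + 2 * (if i = k then 0 else 1) =
      G.degree k * (G.dist i k + 1) := by
  have step : ∀ j ∈ G.neighborFinset k,
      G.dist i j + 2 * (if G.dist i j + 1 = G.dist i k then 1 else 0) = G.dist i k + 1 := by
    intro j hj
    rcases hG.dist_eq_dist_add_one_of_adj i (G.mem_neighborFinset k j |>.1 hj) with h | h <;>
      split_ifs <;> omega
  rw [← hG.sum_neighborFinset_ite_dist_add_one_eq i k 1, mul_sum, ← sum_add_distrib,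
    sum_congr rfl step, sum_const, card_neighborFinset_eq_degree, smul_eq_mul]

theorem sum_sum_neighborFinset_comm {M : Type*} [AddCommMonoid M] (f : V → V → M) :
    ∑ j, ∑ k ∈ G.neighborFinset j, f j k = ∑ j, ∑ k ∈ G.neighborFinset j, f k j := by
  simp only [neighborFinset_eq_filter, sum_filter]
  rw [sum_comm]
  exact sum_congr rfl fun j _ => sum_congr rfl fun k _ => if_congr (G.adj_comm k j) rfl rfl

theorem IsTree.sum_dist_mul_degree_add_card (hG : G.IsTree) (i : V) :
    ∑ j, G.dist i j * G.degree j + Fintype.card V = 2 * ∑ j, G.dist i j + 1 := by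
  classical
  have split_neighbors : ∀ j, G.dist i j * G.degree j =
      ∑ k ∈ G.neighborFinset j, (if G.dist i k + 1 = G.dist i j then G.dist i j else 0) +
      ∑ k ∈ G.neighborFinset j, (if G.dist i j + 1 = G.dist i k then G.dist i j else 0) := by
    intro j
    rw [← sum_add_distrib, ← card_neighborFinset_eq_degree, mul_comm, ← smul_eq_mul,
      ← sum_const]
    refine sum_congr rfl fun k hk => ?_
    rcases hG.dist_eq_dist_add_one_of_adj i (G.mem_neighborFinset j k |>.1 hk) with h | h <;>
      split_ifs <;> omega
  have toward : ∀ j,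
      ∑ k ∈ G.neighborFinset j, (if G.dist i k + 1 = G.dist i j then G.dist i j else 0) =
        G.dist i j := by
    intro j
    rw [hG.sum_neighborFinset_ite_dist_add_one_eq]
    split_ifs with h <;> simp [h]
  have away : ∀ j,
      ∑ k ∈ G.neighborFinset j, (if G.dist i k + 1 = G.dist i j then G.dist i k else 0) +
        (if i = j then 0 else 1) = G.dist i j := by
    intro j
    rw [← hG.sum_neighborFinset_ite_dist_add_one_eq i j 1, ← sum_add_distrib]
    exact (sum_congr rfl fun k _ => by split_ifs <;> omega).trans (toward j)
  have card : ∑ j, (if i = j then 0 else 1) + 1 = Fintype.card V := by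
    have := hG.connected.nonempty
    simp [sum_ite, filter_ne, Nat.sub_add_cancel Fintype.card_pos]
  rw [sum_congr rfl fun j _ => split_neighbors j, sum_add_distrib, sum_sum_neighborFinset_comm
    (fun j k => if G.dist i j + 1 = G.dist i k then G.dist i j else 0), ← card,
    sum_congr rfl fun j _ => toward j, ← sum_congr rfl fun j _ => away j, sum_add_distrib]
  ring

open Matrix

variable {R : Type*}

theorem lapMatrix_apply [AddGroupWithOne R] [DecidableEq V] (i j : V) :
    G.lapMatrix R i j = if i = j then (G.degree i : R) else -(if G.Adj i j then 1 else 0) := by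
  by_cases h : i = j
  · subst h
    simp [lapMatrix, degMatrix]
  · simp [lapMatrix, degMatrix, h, adjMatrix_apply]

theorem IsTree.distMatrix_mul_lapMatrix [CommRing R] [DecidableEq V] (hG : G.IsTree) :
    G.distMatrix R * G.lapMatrix R = vecMulVec 1 (fun k => 2 - (G.degree k : R)) - 2 := by
  ext i k
  have h := congrArg (Nat.cast : ℕ → R) (hG.sum_neighborFinset_dist_add i k)
  push_cast at h
  rw [lapMatrix, mul_sub, Matrix.sub_apply, Matrix.sub_apply, degMatrix, mul_diagonal,
    mul_adjMatrix_apply]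
  simp only [distMatrix, of_apply, vecMulVec_apply, Pi.one_apply, ofNat_apply]
  split_ifs at h ⊢ with hik
  · subst hik
    simp only [dist_self, Nat.cast_zero, zero_mul, mul_zero, add_zero, zero_add] at h ⊢
    linear_combination -h
  · linear_combination -h

theorem IsTree.distMatrix_mulVec_two_sub_degree [CommRing R] (hG : G.IsTree) :
    G.distMatrix R *ᵥ (fun j => 2 - (G.degree j : R)) = fun _ => (Fintype.card V : R) - 1 := by
  ext i
  have h := congrArg (Nat.cast : ℕ → R) (hG.sum_dist_mul_degree_add_card i)
  push_cast at h
  simp only [mulVec, dotProduct, distMatrix, of_apply, mul_sub, sum_sub_distrib, ← sum_mul]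
  linear_combination -h

section Inverse

variable [Field R] [CharZero R] [DecidableEq V] [Nontrivial V]

theorem IsTree.distMatrix_mul_eq_one (hG : G.IsTree) :
    G.distMatrix R * ((2 * ((Fintype.card V : R) - 1))⁻¹ •
      vecMulVec (fun k => 2 - (G.degree k : R)) (fun k => 2 - (G.degree k : R)) -
      (2 : R)⁻¹ • G.lapMatrix R) = 1 := by
  have hcard : (Fintype.card V : R) - 1 ≠ 0 :=
    sub_ne_zero.2 (by exact_mod_cast Fintype.one_lt_card.ne')
  rw [mul_sub, Matrix.mul_smul, Matrix.mul_smul, mul_vecMulVec,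
    hG.distMatrix_mulVec_two_sub_degree, hG.distMatrix_mul_lapMatrix]
  ext i k
  simp only [Matrix.sub_apply, Matrix.smul_apply, vecMulVec_apply, Pi.one_apply, ofNat_apply,
    one_apply, smul_eq_mul]
  field_simp
  split_ifs <;> ring

theorem IsTree.isUnit_distMatrix (hG : G.IsTree) : IsUnit (G.distMatrix R) :=
  (isUnit_iff_isUnit_det _).2 (isUnit_det_of_right_inverse hG.distMatrix_mul_eq_one)

theorem IsTree.inv_distMatrix (hG : G.IsTree) :
    (G.distMatrix R)⁻¹ = (2 * ((Fintype.card V : R) - 1))⁻¹ •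
      vecMulVec (fun k => 2 - (G.degree k : R)) (fun k => 2 - (G.degree k : R)) -
      (2 : R)⁻¹ • G.lapMatrix R :=
  inv_eq_right_inv hG.distMatrix_mul_eq_one

end Inverse

end SimpleGraph

theorem stmt10 {n : ℕ} (G : SimpleGraph (Fin (n + 2))) [DecidableRel G.Adj]
    (hT : G.IsTree)
    (D : Matrix (Fin (n + 2)) (Fin (n + 2)) ℂ) (hD : ∀ i j, D i j = G.dist i j) :
    IsUnit D ∧ ∀ i j, D⁻¹ i j =
      ((2 - (G.degree i : ℂ)) * (2 - (G.degree j : ℂ))) / (2 * (n + 1)) +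
      (if i = j then -(G.degree i : ℂ) / 2
       else (if G.Adj i j then (1 : ℂ) else 0) / 2) := by
  obtain rfl : D = G.distMatrix ℂ := Matrix.ext hD
  refine ⟨hT.isUnit_distMatrix, fun i j => ?_⟩
  rw [hT.inv_distMatrix, Matrix.sub_apply, Matrix.smul_apply, Matrix.smul_apply,
    Matrix.vecMulVec_apply, SimpleGraph.lapMatrix_apply, Fintype.card_fin]
  push_cast
  split_ifs <;> ring
end

section
/- Let T be a tree on n ≥ 2 vertices with distance matrix M, and let y = (c_1,...,c_n) be the unique row vector with yM = (1,...,1). Then c_r = (2−d_r)/(n−1) for each vertex r, where d_r is the degree of r, and Σ_r c_r = 2/(n−1). -/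
open MvPolynomial Finset

set_option linter.unusedSectionVars false

open SimpleGraph Finset

section TreeAux

variable {V : Type*} [DecidableEq V] {G : SimpleGraph V}

lemma path_length_eq_dist (hT : G.IsTree) {u v : V} (p : G.Walk u v) (hp : p.IsPath) :
    p.length = G.dist u v := by
  obtain ⟨w, hw⟩ := hT.isConnected.exists_walk_length_eq_dist u v
  have hq : p = w.bypass :=
    (hT.existsUnique_path u v).unique hp w.bypass_isPath
  refine le_antisymm ?_ (SimpleGraph.dist_le p)
  calc p.length = w.bypass.length := by rw [hq]
    _ ≤ w.length := SimpleGraph.Walk.length_bypass_le w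
    _ = _ := hw

lemma mem_support_dist_lt (hT : G.IsTree) {s j r : V} (P : G.Walk s j) (hP : P.IsPath)
    (hne : s ≠ r) (hr : r ∈ P.support) : G.dist r j < G.dist s j := by
  have hdrop := hP.dropUntil hr
  have hlen : (P.takeUntil r hr).length + (P.dropUntil r hr).length = P.length := by
    have := congrArg SimpleGraph.Walk.length (P.take_spec hr)
    rwa [SimpleGraph.Walk.length_append] at this
  have h1 : (P.dropUntil r hr).length = G.dist r j := path_length_eq_dist hT _ hdrop
  have h2 : P.length = G.dist s j := path_length_eq_dist hT _ hP
  have h3 : (P.takeUntil r hr).length ≠ 0 := fun h0 =>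
    hne (SimpleGraph.Walk.eq_of_length_eq_zero h0)
  omega

lemma adj_dist_cases (hT : G.IsTree) {r s j : V} (h : G.Adj r s) :
    G.dist r j = G.dist s j + 1 ∨ G.dist s j = G.dist r j + 1 := by
  obtain ⟨P, hP, -⟩ := hT.existsUnique_path s j
  by_cases hr : r ∈ P.support
  · right
    have hlt := mem_support_dist_lt hT P hP h.ne' hr
    have h4 : G.dist s j ≤ G.dist r j + 1 := by
      obtain ⟨p, hp⟩ := hT.isConnected.exists_walk_length_eq_dist r j
      have := SimpleGraph.dist_le (SimpleGraph.Walk.cons h.symm p)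
      simpa [SimpleGraph.Walk.length_cons, hp] using this
    omega
  · left
    have hcons : (SimpleGraph.Walk.cons h P).IsPath := hP.cons hr
    have := path_length_eq_dist hT _ hcons
    have hP' := path_length_eq_dist hT P hP
    simp only [SimpleGraph.Walk.length_cons] at this
    omega

lemma closer_unique (hT : G.IsTree) {j r s s' : V} (h : G.Adj r s) (h' : G.Adj r s')
    (hd : G.dist s j + 1 = G.dist r j) (hd' : G.dist s' j + 1 = G.dist r j) : s = s' := by
  have key : ∀ (t : V) (ht : G.Adj r t), G.dist t j + 1 = G.dist r j →
      ∃ P : G.Walk t j, (SimpleGraph.Walk.cons ht P).IsPath := by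
    intro t ht hdt
    obtain ⟨P, hP, -⟩ := hT.existsUnique_path t j
    refine ⟨P, hP.cons fun hr => ?_⟩
    have := mem_support_dist_lt hT P hP ht.ne' hr
    omega
  obtain ⟨P, hP⟩ := key s h hd
  obtain ⟨P', hP'⟩ := key s' h' hd'
  have heq : SimpleGraph.Walk.cons h P = SimpleGraph.Walk.cons h' P' :=
    (hT.existsUnique_path r j).unique hP hP'
  have := congrArg (fun w => SimpleGraph.Walk.getVert w 1) heq
  simpa [SimpleGraph.Walk.getVert_cons_succ, SimpleGraph.Walk.getVert_zero] using this

lemma closer_exists (hT : G.IsTree) {j r : V} (hne : r ≠ j) :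
    ∃ s, G.Adj r s ∧ G.dist s j + 1 = G.dist r j := by
  have hd : G.dist r j ≠ 0 := (hT.isConnected.pos_dist_of_ne hne).ne'
  obtain ⟨w, hw⟩ := SimpleGraph.exists_walk_of_dist_ne_zero hd
  obtain ⟨x, hadj, q, rfl⟩ := SimpleGraph.Walk.exists_eq_cons_of_ne hne w
  refine ⟨x, hadj, ?_⟩
  have h1 : G.dist x j ≤ q.length := SimpleGraph.dist_le q
  have h2 : q.length + 1 = G.dist r j := by
    simpa [SimpleGraph.Walk.length_cons] using hw
  have h3 : G.dist r j ≤ G.dist x j + 1 := by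
    obtain ⟨p, hp⟩ := hT.isConnected.exists_walk_length_eq_dist x j
    have := SimpleGraph.dist_le (SimpleGraph.Walk.cons hadj p)
    simpa [SimpleGraph.Walk.length_cons, hp] using this
  omega

variable [Fintype V] [DecidableRel G.Adj]

/-- Neighbors of `r` that are closer to the target `t`. -/
noncomputable def Fc (G : SimpleGraph V) [DecidableRel G.Adj] (t r : V) : Finset V :=
  (G.neighborFinset r).filter (fun s => G.dist s t + 1 = G.dist r t)

/-- Neighbors of `r` that are farther from the target `t`. -/
noncomputable def Ff (G : SimpleGraph V) [DecidableRel G.Adj] (t r : V) : Finset V :=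
  (G.neighborFinset r).filter (fun s => G.dist r t + 1 = G.dist s t)

lemma card_Fc_self (t : V) : (Fc G t t).card = 0 := by
  rw [Finset.card_eq_zero, Finset.eq_empty_iff_forall_notMem]
  intro s hs
  simp only [Fc, Finset.mem_filter, SimpleGraph.dist_self] at hs
  omega

lemma card_Fc_of_ne (hT : G.IsTree) {t r : V} (h : r ≠ t) : (Fc G t r).card = 1 := by
  obtain ⟨s, hadj, hds⟩ := closer_exists hT h
  rw [Finset.card_eq_one]
  refine ⟨s, ?_⟩
  ext x
  simp only [Fc, Finset.mem_filter, SimpleGraph.mem_neighborFinset, Finset.mem_singleton]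
  constructor
  · rintro ⟨hx, hdx⟩
    exact closer_unique hT hx hadj hdx hds
  · rintro rfl
    exact ⟨hadj, hds⟩

lemma Fc_union_Ff (hT : G.IsTree) (t r : V) :
    Fc G t r ∪ Ff G t r = G.neighborFinset r := by
  ext s
  simp only [Fc, Ff, Finset.mem_union, Finset.mem_filter, SimpleGraph.mem_neighborFinset]
  constructor
  · rintro (⟨h, -⟩ | ⟨h, -⟩) <;> exact h
  · intro h
    rcases adj_dist_cases hT h (j := t) with hd | hd
    · exact Or.inl ⟨h, by omega⟩
    · exact Or.inr ⟨h, by omega⟩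

lemma Fc_disj (t r : V) : Disjoint (Fc G t r) (Ff G t r) := by
  rw [Finset.disjoint_left]
  intro s hs hs'
  simp only [Fc, Ff, Finset.mem_filter] at hs hs'
  omega

lemma card_Fc_add_Ff (hT : G.IsTree) (t r : V) :
    (Fc G t r).card + (Ff G t r).card = G.degree r := by
  rw [← Finset.card_union_of_disjoint (Fc_disj t r), Fc_union_Ff hT]
  rfl

lemma sum_card_Fc (hT : G.IsTree) (j : V) :
    (∑ r, (Fc G j r).card) + 1 = Fintype.card V := by
  rw [← Finset.sum_erase_add _ _ (Finset.mem_univ j), card_Fc_self]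
  have : ∑ r ∈ Finset.univ.erase j, (Fc G j r).card
      = ∑ r ∈ Finset.univ.erase j, 1 := by
    refine Finset.sum_congr rfl fun r hr => ?_
    exact card_Fc_of_ne hT (Finset.mem_erase.mp hr).1
  rw [this, Finset.sum_const, smul_eq_mul, mul_one, Finset.card_erase_of_mem (Finset.mem_univ j),
    Finset.card_univ]
  have : 0 < Fintype.card V := Fintype.card_pos_iff.mpr hT.isConnected.nonempty
  omega

lemma deg_dist_identity (hT : G.IsTree) (j : V) :
    (∑ r, G.degree r * G.dist r j) + (Fintype.card V - 1) = 2 * ∑ r, G.dist r j := by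
  classical
  have hE : G.edgeFinset.card + 1 = Fintype.card V := hT.card_edgeFinset
  have hdeg : ∑ r, G.degree r = 2 * G.edgeFinset.card :=
    SimpleGraph.sum_degrees_eq_twice_card_edges G
  have hsumdeg : (∑ r, (Fc G j r).card) + ∑ r, (Ff G j r).card = ∑ r, G.degree r := by
    rw [← Finset.sum_add_distrib]
    exact Finset.sum_congr rfl fun r _ => card_Fc_add_Ff hT j r
  have hFc := sum_card_Fc (G := G) hT j
  -- T1 : close part
  have hT1 : (∑ r, ∑ _s ∈ Fc G j r, G.dist r j) = ∑ r, G.dist r j := by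
    refine Finset.sum_congr rfl fun r _ => ?_
    rw [Finset.sum_const, smul_eq_mul]
    by_cases h : r = j
    · subst h; simp [SimpleGraph.dist_self]
    · rw [card_Fc_of_ne hT h, one_mul]
  -- A = T1 + T2
  have hA : ∑ r, G.degree r * G.dist r j
      = (∑ r, ∑ _s ∈ Fc G j r, G.dist r j) + ∑ r, ∑ _s ∈ Ff G j r, G.dist r j := by
    rw [← Finset.sum_add_distrib]
    refine Finset.sum_congr rfl fun r _ => ?_
    rw [← Finset.sum_union (Fc_disj j r), Fc_union_Ff hT, Finset.sum_const, smul_eq_mul]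
    rfl
  -- swap
  have hswap : (∑ r, ∑ _s ∈ Ff G j r, G.dist r j) + (∑ r, (Ff G j r).card)
      = ∑ r, G.dist r j := by
    have e1 : ∑ r, ∑ s ∈ Ff G j r, (G.dist r j + 1) = ∑ r, ∑ s ∈ Ff G j r, G.dist s j := by
      refine Finset.sum_congr rfl fun r _ => Finset.sum_congr rfl fun s hs => ?_
      exact (Finset.mem_filter.mp hs).2
    have e2 : ∑ r, ∑ s ∈ Ff G j r, (G.dist r j + 1)
        = (∑ r, ∑ _s ∈ Ff G j r, G.dist r j) + ∑ r, (Ff G j r).card := by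
      rw [← Finset.sum_add_distrib]
      refine Finset.sum_congr rfl fun r _ => ?_
      rw [Finset.sum_add_distrib, Finset.sum_const, Finset.sum_const, smul_eq_mul, smul_eq_mul,
        mul_one]
    have e3 : (∑ r, ∑ s ∈ Ff G j r, G.dist s j) = ∑ s, ∑ _r ∈ Fc G j s, G.dist s j := by
      refine Finset.sum_comm' ?_
      intro r s
      simp only [Finset.mem_univ, true_and, and_true, Ff, Fc, Finset.mem_filter,
        SimpleGraph.mem_neighborFinset]
      rw [SimpleGraph.adj_comm]
    rw [← e2, e1, e3]
    exact hT1
  omega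

end TreeAux
theorem stmt11 {n : ℕ} (G : SimpleGraph (Fin (n + 2))) [DecidableRel G.Adj]
    (hT : G.IsTree) (c : Fin (n + 2) → ℂ)
    (hc : ∀ j, ∑ r, c r * (G.dist r j : ℂ) = 1) :
    (∀ r, c r = (2 - (G.degree r : ℂ)) / (n + 1)) ∧ ∑ r, c r = 2 / ((n : ℂ) + 1) := by
  have hn1 : ((n : ℂ) + 1) ≠ 0 := by
    have : ((n + 1 : ℕ) : ℂ) ≠ 0 := Nat.cast_ne_zero.mpr (Nat.succ_ne_zero n)
    push_cast at this; exact this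
  -- the key tree identity, in ℂ
  have hkey : ∀ j : Fin (n + 2),
      ∑ r, (2 - (G.degree r : ℂ)) * (G.dist r j : ℂ) = (n : ℂ) + 1 := by
    intro j
    have h := deg_dist_identity (G := G) hT j
    rw [Fintype.card_fin] at h
    have h2 : (∑ r, G.degree r * G.dist r j) + (n + 1) = 2 * ∑ r, G.dist r j := by omega
    have h3 := congrArg (fun k : ℕ => (k : ℂ)) h2
    push_cast at h3
    have e : ∑ r, (2 - (G.degree r : ℂ)) * (G.dist r j : ℂ)
        = 2 * (∑ r, (G.dist r j : ℂ)) - ∑ r, (G.degree r : ℂ) * (G.dist r j : ℂ) := by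
      rw [Finset.mul_sum, ← Finset.sum_sub_distrib]
      exact Finset.sum_congr rfl fun r _ => by ring
    rw [e]
    linear_combination -h3
  -- step A : 2 c_j = (2 - deg j) * S
  have stepA : ∀ j, (∑ r, c r) * ((G.degree j : ℂ) - 2) + 2 * c j = 0 := by
    intro j
    have h2 : ∀ r : Fin (n + 2),
        ∑ j' ∈ G.neighborFinset j, ((G.dist r j' : ℂ) - (G.dist r j : ℂ))
          = ((G.degree j : ℂ) - 2) + (if r = j then 2 else 0) := by
      intro r
      rw [← Fc_union_Ff hT r j, Finset.sum_union (Fc_disj r j)]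
      have hclose : ∑ s ∈ Fc G r j, ((G.dist r s : ℂ) - (G.dist r j : ℂ))
          = -((Fc G r j).card : ℂ) := by
        have hterm : ∀ s ∈ Fc G r j, ((G.dist r s : ℂ) - (G.dist r j : ℂ)) = -1 := by
          intro s hs
          obtain ⟨-, hd⟩ := Finset.mem_filter.mp hs
          rw [SimpleGraph.dist_comm (u := r) (v := s),
            SimpleGraph.dist_comm (u := r) (v := j), ← hd]
          push_cast; ring
        rw [Finset.sum_congr rfl hterm, Finset.sum_const, nsmul_eq_mul, mul_neg_one]
      have hfar : ∑ s ∈ Ff G r j, ((G.dist r s : ℂ) - (G.dist r j : ℂ))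
          = ((Ff G r j).card : ℂ) := by
        have hterm : ∀ s ∈ Ff G r j, ((G.dist r s : ℂ) - (G.dist r j : ℂ)) = 1 := by
          intro s hs
          obtain ⟨-, hd⟩ := Finset.mem_filter.mp hs
          rw [SimpleGraph.dist_comm (u := r) (v := s),
            SimpleGraph.dist_comm (u := r) (v := j), ← hd]
          push_cast; ring
        rw [Finset.sum_congr rfl hterm, Finset.sum_const, nsmul_eq_mul, mul_one]
      rw [hclose, hfar]
      have hcards := card_Fc_add_Ff (G := G) hT r j
      by_cases hrj : r = j
      · subst hrj
        rw [card_Fc_self] at hcards ⊢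
        have : ((Ff G r r).card : ℂ) = (G.degree r : ℂ) := by
          have h' : (Ff G r r).card = G.degree r := by omega
          exact_mod_cast congrArg (fun k : ℕ => (k : ℂ)) h'
        rw [this]; simp
      · rw [card_Fc_of_ne hT (Ne.symm hrj)] at hcards ⊢
        have : ((Ff G r j).card : ℂ) + 1 = (G.degree j : ℂ) := by
          have h' : (Ff G r j).card + 1 = G.degree j := by omega
          exact_mod_cast congrArg (fun k : ℕ => (k : ℂ)) h'
        rw [if_neg hrj]
        push_cast
        linear_combination this
    have h0 : ∑ r, c r * (((G.degree j : ℂ) - 2) + (if r = j then 2 else 0)) = 0 := by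
      have e : ∑ r, c r * (((G.degree j : ℂ) - 2) + (if r = j then 2 else 0))
          = ∑ r, ∑ j' ∈ G.neighborFinset j, (c r * ((G.dist r j' : ℂ) - (G.dist r j : ℂ))) := by
        refine Finset.sum_congr rfl fun r _ => ?_
        rw [← Finset.mul_sum, h2 r]
      rw [e, Finset.sum_comm]
      refine Finset.sum_eq_zero fun j' _ => ?_
      have e2 : ∑ r, c r * ((G.dist r j' : ℂ) - (G.dist r j : ℂ))
          = (∑ r, c r * (G.dist r j' : ℂ)) - ∑ r, c r * (G.dist r j : ℂ) := by
        rw [← Finset.sum_sub_distrib]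
        exact Finset.sum_congr rfl fun r _ => by ring
      rw [e2, hc j', hc j, sub_self]
    have expand : ∑ r, c r * (((G.degree j : ℂ) - 2) + (if r = j then 2 else 0))
        = (∑ r, c r) * ((G.degree j : ℂ) - 2) + 2 * c j := by
      simp only [mul_add]
      rw [Finset.sum_add_distrib, ← Finset.sum_mul]
      congr 1
      have e3 : ∀ r : Fin (n + 2), c r * (if r = j then (2 : ℂ) else 0)
          = if r = j then 2 * c r else 0 := by
        intro r; by_cases h : r = j <;> simp [h, mul_comm]
      rw [Finset.sum_congr rfl fun r _ => e3 r,
        Finset.sum_ite_eq' Finset.univ j (fun r => 2 * c r)]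
      simp
    rw [← expand]; exact h0
  have hA : ∀ r, c r = (2 - (G.degree r : ℂ)) * (∑ t, c t) / 2 := by
    intro r
    linear_combination (stepA r) / 2
  have hS : (∑ r, c r) = 2 / ((n : ℂ) + 1) := by
    have h1 := hc 0
    have h2 : ∑ r, c r * (G.dist r 0 : ℂ)
        = (∑ t, c t) / 2 * ∑ r, (2 - (G.degree r : ℂ)) * (G.dist r 0 : ℂ) := by
      rw [Finset.mul_sum]
      refine Finset.sum_congr rfl fun r _ => ?_
      rw [hA r]; ring
    rw [h2, hkey 0] at h1
    field_simp at h1 ⊢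
    linear_combination h1
  refine ⟨fun r => ?_, hS⟩
  rw [hA r, hS]
  field_simp
end

section
/- Let T be a tree on n ≥ 2 vertices. None of the partial derivatives D_r p of the Steiner 3-form p = p_T^{(3)} is divisible by s = Σ_j x_j in ℂ[x_1,...,x_n]. -/
open MvPolynomial Finset

/-! Evaluate at `v = e_r - e_b` for some `b ≠ r`. There `s` vanishes, while only the monomials in
`x_r, x_b` survive in `D_r p`, giving `D_r p (v) = -3 d({r, b})` since `d({r}) = 0`; and the Steiner
distance of two distinct vertices of a connected graph is positive. -/

lemma steinerDist_singleton {V : Type*} (G : SimpleGraph V) (v : V) : steinerDist G {v} = 0 :=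
  Nat.eq_zero_of_le_zero <| Nat.sInf_le
    ⟨G.singletonSubgraph v, SimpleGraph.Subgraph.singletonSubgraph_connected, by simp,
      by simp [SimpleGraph.edgeSet_singletonSubgraph]⟩

-- `Finite V` matters: `Set.ncard` of an infinite edge set is `0`.
lemma steinerDist_pair_pos {V : Type*} [Finite V] {G : SimpleGraph V} (hG : G.Connected) {a b : V}
    (hab : a ≠ b) : 0 < steinerDist G {a, b} := by
  have hne : {m | ∃ H : G.Subgraph, H.Connected ∧ {a, b} ⊆ H.verts ∧
      H.edgeSet.ncard = m}.Nonempty :=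
    ⟨_, SimpleGraph.toSubgraph G le_rfl, hG.toSubgraph le_rfl, by simp, rfl⟩
  obtain ⟨H, hH, hsub, hcard⟩ := Nat.sInf_mem hne
  rw [steinerDist, Nat.pos_iff_ne_zero, ← hcard]
  have ha : a ∈ H.verts := hsub (by simp)
  have hb : b ∈ H.verts := hsub (by simp)
  have : Nontrivial H.verts := ⟨⟨a, ha⟩, ⟨b, hb⟩, by simpa using hab⟩
  obtain ⟨u, hu⟩ := hH.preconnected.exists_adj_of_nontrivial ⟨a, ha⟩
  exact ((Set.ncard_pos (Set.toFinite _)).mpr ⟨s(a, u), hu⟩).ne'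

lemma eval_pderiv_cubic {σ R : Type*} [CommSemiring R] [Fintype σ] [DecidableEq σ]
    (c : σ → σ → σ → R) (v : σ → R) (r : σ) :
    eval v (pderiv r (∑ i, ∑ j, ∑ k, C (c i j k) * X i * X j * X k)) =
      ∑ j, v j * ∑ k, v k * (c r j k + c j r k + c j k r) := by
  simp only [map_sum, pderiv_mul, pderiv_C, pderiv_X, Pi.single_apply, map_add, map_mul, eval_C,
    eval_X, zero_mul, zero_add, mul_zero, mul_ite, mul_one, ite_mul,
    add_mul, sum_add_distrib, sum_ite_irrel, sum_const_zero, sum_ite_eq', mem_univ, if_true]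
  simp only [← sum_add_distrib, mul_sum]
  refine sum_congr rfl fun j _ => sum_congr rfl fun k _ => ?_
  ring

lemma sum_single_sub_single_mul {σ R : Type*} [Ring R] [Fintype σ] [DecidableEq σ]
    (r b : σ) (f : σ → R) :
    ∑ j, (Pi.single r 1 - Pi.single b 1 : σ → R) j * f j = f r - f b := by
  simp [sub_mul, sum_sub_distrib, Pi.single_apply]

lemma eval_pderiv_steinerForm3_s13 {n : ℕ} (G : SimpleGraph (Fin n)) (r b : Fin n) :
    eval (Pi.single r 1 - Pi.single b 1) (pderiv r (steinerForm3 G)) =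
      -3 * (steinerDist G {r, b} : ℂ) := by
  rw [steinerForm3, eval_pderiv_cubic, sum_single_sub_single_mul, sum_single_sub_single_mul,
    sum_single_sub_single_mul]
  simp only [Set.insert_eq_of_mem, Set.mem_insert_iff, Set.mem_singleton_iff, or_true,
    Set.insert_idem, Set.pair_comm b r, steinerDist_singleton]
  ring

lemma eval_sPoly_single_sub_single {n : ℕ} (r b : Fin n) :
    eval (Pi.single r 1 - Pi.single b 1) (sPoly n) = 0 := by
  simp [sPoly, sum_sub_distrib]

theorem stmt13 {n : ℕ} (G : SimpleGraph (Fin (n + 2))) (hT : G.IsTree) (r : Fin (n + 2)) :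
    ¬ sPoly (n + 2) ∣ MvPolynomial.pderiv r (steinerForm3 G) := by
  rintro ⟨q, hq⟩
  obtain ⟨b, hbr⟩ := exists_ne r
  have hzero := congrArg (eval (Pi.single r 1 - Pi.single b 1)) hq
  rw [eval_pderiv_steinerForm3_s13, map_mul, eval_sPoly_single_sub_single, zero_mul] at hzero
  exact (steinerDist_pair_pos hT.connected hbr.symm).ne' (by simpa using hzero)
end
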